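/- Let Q be a symmetric positive semidefinite N×N real matrix with Moore–Penrose pseudo-inverse Q⁺, and let y ∈ ℝ^N. Then the Fenchel conjugate of the function f(z) = (1/2)⟨y − z, Q(y − z)⟩ is given by f*(v) = ⟨v, y⟩ + (1/2)⟨v, Q⁺ v⟩ if v ∈ Range(Q), and f*(v) = +∞ otherwise. -/

import Mathlib

open Matrix

noncomputable section

/-- Fenchel conjugate `f*(v) = sup_x ⟨v,x⟩ - f(x)`. -/
def fconj {N : ℕ} (f : (Fin N → ℝ) → EReal) (v : Fin N → ℝ) : EReal :=
  ⨆ x : Fin N → ℝ, ((v ⬝ᵥ x : ℝ) : EReal) - f x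

/-- `Ap` is the Moore–Penrose pseudo-inverse of `A` (Penrose equations). -/
def IsMoorePenrose {m n : ℕ} (A : Matrix (Fin m) (Fin n) ℝ)
    (Ap : Matrix (Fin n) (Fin m) ℝ) : Prop :=
  A * Ap * A = A ∧ Ap * A * Ap = Ap ∧ (A * Ap)ᵀ = A * Ap ∧ (Ap * A)ᵀ = Ap * A

/-!
On `Range Q` the supremum is attained: writing `v = Q a`, completing the square gives
`⟨v, z⟩ - ½⟨y - z, Q(y - z)⟩ = ⟨v, y⟩ + ½⟨a, Q a⟩ - ½⟨z - y - a, Q(z - y - a)⟩`, and `a = Q⁺ v`.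
Off `Range Q`, the residual `u = v - Q Q⁺ v` lies in `ker Q` and has `⟨v, u⟩ = ‖u‖² > 0`,
so the objective grows linearly along the line `y + t u`.
-/

namespace Matrix

variable {n : Type*} [Fintype n]

theorem IsSymm.dotProduct_sub_half_quadratic {Q : Matrix n n ℝ} (hQ : Q.IsSymm)
    (a y z : n → ℝ) :
    (Q *ᵥ a) ⬝ᵥ z - 1 / 2 * ((y - z) ⬝ᵥ Q *ᵥ (y - z)) =
      (Q *ᵥ a) ⬝ᵥ y + 1 / 2 * (a ⬝ᵥ Q *ᵥ a) - 1 / 2 * ((z - y - a) ⬝ᵥ Q *ᵥ (z - y - a)) := by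
  have hcomm (x w : n → ℝ) : x ⬝ᵥ Q *ᵥ w = w ⬝ᵥ Q *ᵥ x := by
    rw [← dotProduct_transpose_mulVec, hQ.eq]
  rw [dotProduct_comm (Q *ᵥ a), dotProduct_comm (Q *ᵥ a)]
  simp only [mulVec_sub, dotProduct_sub, sub_dotProduct]
  linarith [hcomm a y, hcomm a z, hcomm y z]

theorem PosSemidef.dotProduct_sub_half_quadratic_le {Q : Matrix n n ℝ} (hQ : Q.PosSemidef)
    (a y z : n → ℝ) :
    (Q *ᵥ a) ⬝ᵥ z - 1 / 2 * ((y - z) ⬝ᵥ Q *ᵥ (y - z)) ≤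
      (Q *ᵥ a) ⬝ᵥ y + 1 / 2 * (a ⬝ᵥ Q *ᵥ a) := by
  have hsq : 0 ≤ (z - y - a) ⬝ᵥ Q *ᵥ (z - y - a) := by
    simpa using hQ.dotProduct_mulVec_nonneg (z - y - a)
  rw [(isHermitian_iff_isSymm.mp hQ.1).dotProduct_sub_half_quadratic]
  linarith

theorem IsSymm.dotProduct_add_sub_half_quadratic {Q : Matrix n n ℝ} (hQ : Q.IsSymm)
    (a y : n → ℝ) :
    (Q *ᵥ a) ⬝ᵥ (y + a) - 1 / 2 * ((y - (y + a)) ⬝ᵥ Q *ᵥ (y - (y + a))) =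
      (Q *ᵥ a) ⬝ᵥ y + 1 / 2 * (a ⬝ᵥ Q *ᵥ a) := by
  simpa using hQ.dotProduct_sub_half_quadratic a y (y + a)

theorem dotProduct_add_smul_sub_half_quadratic_of_mulVec_eq_zero {Q : Matrix n n ℝ}
    {u : n → ℝ} (hu : Q *ᵥ u = 0) (v y : n → ℝ) (t : ℝ) :
    v ⬝ᵥ (y + t • u) - 1 / 2 * ((y - (y + t • u)) ⬝ᵥ Q *ᵥ (y - (y + t • u))) =
      v ⬝ᵥ y + t * (v ⬝ᵥ u) := by
  rw [sub_add_cancel_left, mulVec_neg, mulVec_smul, hu]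
  simp [dotProduct_add]

end Matrix

namespace IsMoorePenrose

variable {m n : ℕ} {A : Matrix (Fin m) (Fin n) ℝ} {Ap : Matrix (Fin n) (Fin m) ℝ}

theorem mulVec_mulVec_eq_self (h : IsMoorePenrose A Ap) {v : Fin m → ℝ}
    (hv : ∃ w, A *ᵥ w = v) : A *ᵥ (Ap *ᵥ v) = v := by
  obtain ⟨w, rfl⟩ := hv
  rw [mulVec_mulVec, mulVec_mulVec, h.1]

/-- Fredholm alternative, with the explicit witness `v - A A⁺ v`. -/
theorem exists_transpose_mulVec_eq_zero_of_not_exists (h : IsMoorePenrose A Ap)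
    {v : Fin m → ℝ} (hv : ¬ ∃ w, A *ᵥ w = v) :
    ∃ u, Aᵀ *ᵥ u = 0 ∧ 0 < v ⬝ᵥ u := by
  obtain ⟨hAApA, -, hAAp, -⟩ := h
  set u := v - A *ᵥ (Ap *ᵥ v)
  have hAu : Aᵀ *ᵥ u = 0 := by
    have : Aᵀ * (A * Ap) = Aᵀ := by rw [← hAAp, ← transpose_mul, hAApA]
    rw [mulVec_sub, mulVec_mulVec, mulVec_mulVec, Matrix.mul_assoc, this, sub_self]
  have hu : u ≠ 0 := fun hu => hv ⟨Ap *ᵥ v, (sub_eq_zero.mp hu).symm⟩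
  refine ⟨u, hAu, ?_⟩
  have hvu : v ⬝ᵥ u = u ⬝ᵥ u := by
    rw [show v = u + A *ᵥ (Ap *ᵥ v) by simp [u], add_dotProduct, dotProduct_comm (A *ᵥ _),
      ← dotProduct_transpose_mulVec, hAu, dotProduct_zero, add_zero]
  simpa [hvu] using dotProduct_self_star_pos_iff.mpr hu

end IsMoorePenrose

section fconj

variable {N : ℕ}

theorem fconj_coe_eq_of_le_of_eq {g : (Fin N → ℝ) → ℝ} {v z₀ : Fin N → ℝ} {c : ℝ}
    (hle : ∀ z, v ⬝ᵥ z - g z ≤ c) (heq : v ⬝ᵥ z₀ - g z₀ = c) :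
    fconj (fun z => (g z : EReal)) v = c := by
  refine le_antisymm (iSup_le fun z => ?_) (le_iSup_of_le z₀ ?_)
  · rw [← EReal.coe_sub]
    exact_mod_cast hle z
  · rw [← EReal.coe_sub]
    exact_mod_cast heq.ge

theorem fconj_coe_eq_top {g : (Fin N → ℝ) → ℝ} {v : Fin N → ℝ}
    (h : ∀ c : ℝ, ∃ z, c < v ⬝ᵥ z - g z) :
    fconj (fun z => (g z : EReal)) v = ⊤ := by
  refine (EReal.eq_top_iff_forall_lt _).mpr fun c => ?_
  obtain ⟨z, hz⟩ := h c
  refine lt_iSup_iff.mpr ⟨z, ?_⟩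
  rw [← EReal.coe_sub]
  exact_mod_cast hz

end fconj

/-- Conjugate of the degenerate quadratic
`f(z) = (1/2)⟨y - z, Q(y - z)⟩` for `Q` symmetric positive semidefinite:
`f*(v) = ⟨v,y⟩ + (1/2)⟨v, Q⁺v⟩` if `v ∈ Range(Q)`, and `f*(v) = +∞` otherwise. -/
theorem stmt_14 {N : ℕ} (Q Qp : Matrix (Fin N) (Fin N) ℝ)
    (hQ : Q.PosSemidef) (hQp : IsMoorePenrose Q Qp)
    (y : Fin N → ℝ) :
    (∀ v : Fin N → ℝ, (∃ w : Fin N → ℝ, Q *ᵥ w = v) →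
      fconj (fun z => ((1 / 2 * ((y - z) ⬝ᵥ (Q *ᵥ (y - z))) : ℝ) : EReal)) v =
        ((v ⬝ᵥ y + 1 / 2 * (v ⬝ᵥ (Qp *ᵥ v)) : ℝ) : EReal)) ∧
    (∀ v : Fin N → ℝ, (¬ ∃ w : Fin N → ℝ, Q *ᵥ w = v) →
      fconj (fun z => ((1 / 2 * ((y - z) ⬝ᵥ (Q *ᵥ (y - z))) : ℝ) : EReal)) v = ⊤) := by
  have hQs : Q.IsSymm := isHermitian_iff_isSymm.mp hQ.1
  constructor
  · intro v hv
    have hQa : Q *ᵥ (Qp *ᵥ v) = v := hQp.mulVec_mulVec_eq_self hv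
    rw [dotProduct_comm v (Qp *ᵥ v)]
    refine fconj_coe_eq_of_le_of_eq (z₀ := y + Qp *ᵥ v) (fun z => ?_) ?_
    · simpa only [hQa] using hQ.dotProduct_sub_half_quadratic_le (Qp *ᵥ v) y z
    · simpa only [hQa] using hQs.dotProduct_add_sub_half_quadratic (Qp *ᵥ v) y
  · intro v hv
    obtain ⟨u, hQu, hvu⟩ := hQp.exists_transpose_mulVec_eq_zero_of_not_exists hv
    rw [hQs.eq] at hQu
    refine fconj_coe_eq_top fun c => ⟨y + ((c - v ⬝ᵥ y) / (v ⬝ᵥ u) + 1) • u, ?_⟩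
    rw [dotProduct_add_smul_sub_half_quadratic_of_mulVec_eq_zero hQu, add_mul,
      div_mul_cancel₀ _ hvu.ne']
    linarith
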